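/- Suppose n ≥ 1, λ(n) := (φ_max² · σ_max / μ_min) · γⁿ < 1, q* satisfies q* = H q*, and ω̃ⁿ ∈ ℝ^k satisfies q_{ω̃ⁿ} = Π(Hⁿ q_{ω̃ⁿ}). Then ‖Π q* − q_{ω̃ⁿ}‖_μ ≤ λ(n) · ‖q* − q_{ω̃ⁿ}‖_μ. -/

import Mathlib

open Finset Matrix

variable {X A : Type*}

noncomputable def bellman [Fintype X] [Fintype A] [Nonempty A]
    (P : X → A → X → ℝ) (r : X × A → ℝ) (γ : ℝ) (q : X × A → ℝ) :
    X × A → ℝ :=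
  fun z => r z + γ * ∑ x' : X, P z.1 z.2 x' *
    Finset.univ.sup' Finset.univ_nonempty (fun a' : A => q (x', a'))

noncomputable def supNorm [Fintype X] [Fintype A] [Nonempty X] [Nonempty A]
    (q : X × A → ℝ) : ℝ :=
  Finset.univ.sup' Finset.univ_nonempty (fun z : X × A => |q z|)

noncomputable def munorm [Fintype X] [Fintype A] (μ q : X × A → ℝ) : ℝ :=
  Real.sqrt (∑ z : X × A, μ z * q z ^ 2)

def qlin {k : ℕ} (φ : X × A → Fin k → ℝ) (ω : Fin k → ℝ) : X × A → ℝ :=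
  fun z => φ z ⬝ᵥ ω

noncomputable def cov [Fintype X] [Fintype A] {k : ℕ}
    (μ : X × A → ℝ) (φ : X × A → Fin k → ℝ) : Matrix (Fin k) (Fin k) ℝ :=
  ∑ z : X × A, μ z • Matrix.vecMulVec (φ z) (φ z)

noncomputable def proj [Fintype X] [Fintype A] {k : ℕ}
    (μ : X × A → ℝ) (φ : X × A → Fin k → ℝ) (q : X × A → ℝ) : X × A → ℝ :=
  fun z => φ z ⬝ᵥ (cov μ φ)⁻¹.mulVec (∑ z' : X × A, (μ z' * q z') • φ z')

noncomputable def enorm2 {k : ℕ} (v : Fin k → ℝ) : ℝ :=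
  Real.sqrt (∑ i, v i ^ 2)

noncomputable def phiMax [Fintype X] [Fintype A] [Nonempty X] [Nonempty A]
    {k : ℕ} (φ : X × A → Fin k → ℝ) : ℝ :=
  Finset.univ.sup' Finset.univ_nonempty (fun z : X × A => enorm2 (φ z))

noncomputable def sigmaMax {k : ℕ} (M : Matrix (Fin k) (Fin k) ℝ) : ℝ :=
  ‖LinearMap.toContinuousLinearMap (Matrix.toEuclideanLin M)‖

noncomputable def gmap [Fintype X] [Fintype A] [Nonempty A] {k : ℕ}
    (P : X → A → X → ℝ) (r : X × A → ℝ) (γ : ℝ)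
    (μ : X × A → ℝ) (φ : X × A → Fin k → ℝ) (n : ℕ) (ω : Fin k → ℝ) :
    Fin k → ℝ :=
  ∑ z : X × A, (μ z * ((bellman P r γ)^[n] (qlin φ ω) z - qlin φ ω z)) • φ z


section Aux

variable [Fintype X] [Fintype A] [Nonempty X] [Nonempty A]

lemma abs_le_supNorm (q : X × A → ℝ) (z : X × A) : |q z| ≤ supNorm q :=
  Finset.le_sup' (fun z : X × A => |q z|) (Finset.mem_univ z)

lemma supNorm_nonneg (q : X × A → ℝ) : 0 ≤ supNorm q := by
  obtain ⟨z⟩ := (inferInstance : Nonempty (X × A))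
  exact (abs_nonneg (q z)).trans (abs_le_supNorm q z)

lemma enorm2_eq {k : ℕ} (w : Fin k → ℝ) :
    enorm2 w = ‖(WithLp.equiv 2 (Fin k → ℝ)).symm w‖ := by
  rw [EuclideanSpace.norm_eq]
  simp [enorm2, Real.norm_eq_abs, sq_abs]

lemma enorm2_nonneg {k : ℕ} (w : Fin k → ℝ) : 0 ≤ enorm2 w := Real.sqrt_nonneg _

lemma abs_dot_le {k : ℕ} (a b : Fin k → ℝ) : |a ⬝ᵥ b| ≤ enorm2 a * enorm2 b := by
  have h := Finset.sum_mul_sq_le_sq_mul_sq Finset.univ a b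
  rw [dotProduct, ← Real.sqrt_sq_eq_abs]
  calc Real.sqrt ((∑ i, a i * b i) ^ 2)
      ≤ Real.sqrt ((∑ i, a i ^ 2) * ∑ i, b i ^ 2) := Real.sqrt_le_sqrt h
    _ = enorm2 a * enorm2 b := Real.sqrt_mul (by positivity) _

lemma enorm2_mulVec_le {k : ℕ} (M : Matrix (Fin k) (Fin k) ℝ) (w : Fin k → ℝ) :
    enorm2 (M.mulVec w) ≤ sigmaMax M * enorm2 w := by
  have h := (LinearMap.toContinuousLinearMap (Matrix.toEuclideanLin M)).le_opNorm
      ((WithLp.equiv 2 (Fin k → ℝ)).symm w)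
  rw [enorm2_eq, enorm2_eq]
  exact h

lemma enorm2_le_phiMax {k : ℕ} (φ : X × A → Fin k → ℝ) (z : X × A) :
    enorm2 (φ z) ≤ phiMax φ :=
  Finset.le_sup' (fun z : X × A => enorm2 (φ z)) (Finset.mem_univ z)

lemma phiMax_nonneg {k : ℕ} (φ : X × A → Fin k → ℝ) : 0 ≤ phiMax φ := by
  obtain ⟨z⟩ := (inferInstance : Nonempty (X × A))
  exact (enorm2_nonneg (φ z)).trans (enorm2_le_phiMax φ z)

lemma enorm2_sum_le {k : ℕ} (μ q : X × A → ℝ) (φ : X × A → Fin k → ℝ)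
    (hμ0 : ∀ z, 0 ≤ μ z) (hμ1 : ∑ z : X × A, μ z = 1) :
    enorm2 (∑ z : X × A, (μ z * q z) • φ z) ≤ phiMax φ * supNorm q := by
  rw [enorm2_eq]
  have hmap : (WithLp.equiv 2 (Fin k → ℝ)).symm (∑ z : X × A, (μ z * q z) • φ z)
      = ∑ z : X × A, (μ z * q z) • (WithLp.equiv 2 (Fin k → ℝ)).symm (φ z) :=
        map_sum (WithLp.linearEquiv 2 ℝ (Fin k → ℝ)).symm _ _
  rw [hmap]
  calc ‖∑ z : X × A, (μ z * q z) • (WithLp.equiv 2 (Fin k → ℝ)).symm (φ z)‖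
      ≤ ∑ z : X × A, ‖(μ z * q z) • (WithLp.equiv 2 (Fin k → ℝ)).symm (φ z)‖ :=
        norm_sum_le _ _
    _ ≤ ∑ z : X × A, μ z * (supNorm q * phiMax φ) := by
        refine Finset.sum_le_sum fun z _ => ?_
        rw [norm_smul, Real.norm_eq_abs, abs_mul, abs_of_nonneg (hμ0 z), ← enorm2_eq,
          mul_assoc]
        refine mul_le_mul_of_nonneg_left ?_ (hμ0 z)
        exact mul_le_mul (abs_le_supNorm q z) (enorm2_le_phiMax φ z)
          (enorm2_nonneg _) (supNorm_nonneg q)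
    _ = phiMax φ * supNorm q := by rw [← Finset.sum_mul, hμ1, one_mul, mul_comm]

lemma proj_abs_le {k : ℕ} (μ q : X × A → ℝ) (φ : X × A → Fin k → ℝ)
    (hμ0 : ∀ z, 0 ≤ μ z) (hμ1 : ∑ z : X × A, μ z = 1) (z : X × A) :
    |proj μ φ q z| ≤ (phiMax φ ^ 2 * sigmaMax (cov μ φ)⁻¹) * supNorm q := by
  have h1 := abs_dot_le (φ z) ((cov μ φ)⁻¹.mulVec (∑ z' : X × A, (μ z' * q z') • φ z'))
  have h2 := enorm2_mulVec_le (cov μ φ)⁻¹ (∑ z' : X × A, (μ z' * q z') • φ z')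
  have h3 := enorm2_sum_le μ q φ hμ0 hμ1
  have hσ : (0:ℝ) ≤ sigmaMax (cov μ φ)⁻¹ := norm_nonneg _
  calc |proj μ φ q z| ≤ enorm2 (φ z) *
        enorm2 ((cov μ φ)⁻¹.mulVec (∑ z' : X × A, (μ z' * q z') • φ z')) := h1
    _ ≤ phiMax φ * (sigmaMax (cov μ φ)⁻¹ * (phiMax φ * supNorm q)) := by
        refine mul_le_mul (enorm2_le_phiMax φ z) (h2.trans ?_) (enorm2_nonneg _)
          (phiMax_nonneg φ)
        exact mul_le_mul_of_nonneg_left h3 hσ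
    _ = (phiMax φ ^ 2 * sigmaMax (cov μ φ)⁻¹) * supNorm q := by ring

lemma proj_sub {k : ℕ} (μ q1 q2 : X × A → ℝ) (φ : X × A → Fin k → ℝ) (z : X × A) :
    proj μ φ (fun w => q1 w - q2 w) z = proj μ φ q1 z - proj μ φ q2 z := by
  simp only [proj, mul_sub, sub_smul, Finset.sum_sub_distrib, Matrix.mulVec_sub,
    dotProduct_sub]

lemma bellman_contract (P : X → A → X → ℝ) (r : X × A → ℝ) (γ : ℝ)
    (hγ0 : 0 ≤ γ) (hP0 : ∀ x a x', 0 ≤ P x a x') (hP1 : ∀ x a, ∑ x' : X, P x a x' = 1)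
    (q1 q2 : X × A → ℝ) :
    supNorm (bellman P r γ q1 - bellman P r γ q2) ≤ γ * supNorm (q1 - q2) := by
  have hmax : ∀ x' : X,
      |(Finset.univ.sup' Finset.univ_nonempty fun a' : A => q1 (x', a')) -
        Finset.univ.sup' Finset.univ_nonempty fun a' : A => q2 (x', a')| ≤
        supNorm (q1 - q2) := by
    intro x'
    rw [abs_sub_le_iff]
    constructor
    · rw [sub_le_iff_le_add]
      refine Finset.sup'_le _ _ fun a _ => ?_
      have h1 : q2 (x', a) ≤ Finset.univ.sup' Finset.univ_nonempty
          fun a' : A => q2 (x', a') :=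
        Finset.le_sup' (fun a' : A => q2 (x', a')) (Finset.mem_univ a)
      have h2 : |q1 (x', a) - q2 (x', a)| ≤ supNorm (q1 - q2) := by
        simpa using abs_le_supNorm (q1 - q2) (x', a)
      have h3 := (abs_le.mp h2).2
      linarith
    · rw [sub_le_iff_le_add]
      refine Finset.sup'_le _ _ fun a _ => ?_
      have h1 : q1 (x', a) ≤ Finset.univ.sup' Finset.univ_nonempty
          fun a' : A => q1 (x', a') :=
        Finset.le_sup' (fun a' : A => q1 (x', a')) (Finset.mem_univ a)
      have h2 : |q1 (x', a) - q2 (x', a)| ≤ supNorm (q1 - q2) := by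
        simpa using abs_le_supNorm (q1 - q2) (x', a)
      have h3 := (abs_le.mp h2).1
      linarith
  refine Finset.sup'_le _ _ fun z _ => ?_
  have hz : (bellman P r γ q1 - bellman P r γ q2) z
      = γ * ∑ x' : X,
          (P z.1 z.2 x' * Finset.univ.sup' Finset.univ_nonempty (fun a' : A => q1 (x', a'))
            - P z.1 z.2 x' *
              Finset.univ.sup' Finset.univ_nonempty (fun a' : A => q2 (x', a'))) := by
    simp only [Pi.sub_apply, bellman, Finset.sum_sub_distrib]
    ring
  rw [hz, abs_mul, abs_of_nonneg hγ0]
  refine mul_le_mul_of_nonneg_left ?_ hγ0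
  calc |∑ x' : X,
          (P z.1 z.2 x' * Finset.univ.sup' Finset.univ_nonempty (fun a' : A => q1 (x', a'))
            - P z.1 z.2 x' *
              Finset.univ.sup' Finset.univ_nonempty (fun a' : A => q2 (x', a')))|
      ≤ ∑ x' : X,
          |P z.1 z.2 x' * Finset.univ.sup' Finset.univ_nonempty (fun a' : A => q1 (x', a'))
            - P z.1 z.2 x' *
              Finset.univ.sup' Finset.univ_nonempty (fun a' : A => q2 (x', a'))| :=
        Finset.abs_sum_le_sum_abs _ _
    _ ≤ ∑ x' : X, P z.1 z.2 x' * supNorm (q1 - q2) := by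
        refine Finset.sum_le_sum fun x' _ => ?_
        rw [← mul_sub, abs_mul, abs_of_nonneg (hP0 z.1 z.2 x')]
        exact mul_le_mul_of_nonneg_left (hmax x') (hP0 z.1 z.2 x')
    _ = supNorm (q1 - q2) := by rw [← Finset.sum_mul, hP1, one_mul]

lemma bellman_iterate_contract (P : X → A → X → ℝ) (r : X × A → ℝ) (γ : ℝ)
    (hγ0 : 0 ≤ γ) (hP0 : ∀ x a x', 0 ≤ P x a x') (hP1 : ∀ x a, ∑ x' : X, P x a x' = 1)
    (q1 q2 : X × A → ℝ) (n : ℕ) :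
    supNorm ((bellman P r γ)^[n] q1 - (bellman P r γ)^[n] q2)
      ≤ γ ^ n * supNorm (q1 - q2) := by
  induction n with
  | zero => simp
  | succ m ih =>
    rw [Function.iterate_succ_apply', Function.iterate_succ_apply', pow_succ]
    calc supNorm (bellman P r γ ((bellman P r γ)^[m] q1)
            - bellman P r γ ((bellman P r γ)^[m] q2))
        ≤ γ * supNorm ((bellman P r γ)^[m] q1 - (bellman P r γ)^[m] q2) :=
          bellman_contract P r γ hγ0 hP0 hP1 _ _
      _ ≤ γ * (γ ^ m * supNorm (q1 - q2)) := mul_le_mul_of_nonneg_left ih hγ0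
      _ = γ ^ m * γ * supNorm (q1 - q2) := by ring

lemma munorm_le_supNorm (μ q : X × A → ℝ) (hμ0 : ∀ z, 0 ≤ μ z)
    (hμ1 : ∑ z : X × A, μ z = 1) : munorm μ q ≤ supNorm q := by
  rw [munorm]
  have h : ∑ z : X × A, μ z * q z ^ 2 ≤ supNorm q ^ 2 := by
    calc ∑ z : X × A, μ z * q z ^ 2 ≤ ∑ z : X × A, μ z * supNorm q ^ 2 := by
          refine Finset.sum_le_sum fun z _ => mul_le_mul_of_nonneg_left ?_ (hμ0 z)
          rw [← sq_abs (q z)]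
          exact pow_le_pow_left₀ (abs_nonneg _) (abs_le_supNorm q z) 2
      _ = supNorm q ^ 2 := by rw [← Finset.sum_mul, hμ1, one_mul]
  calc Real.sqrt (∑ z : X × A, μ z * q z ^ 2) ≤ Real.sqrt (supNorm q ^ 2) :=
        Real.sqrt_le_sqrt h
    _ = supNorm q := Real.sqrt_sq (supNorm_nonneg q)

lemma munorm_nonneg (μ q : X × A → ℝ) : 0 ≤ munorm μ q := Real.sqrt_nonneg _

lemma sqrt_mul_supNorm_le_munorm (μ q : X × A → ℝ) (μmin : ℝ) (hμmin : 0 < μmin)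
    (hμ : ∀ z, μmin ≤ μ z) :
    Real.sqrt μmin * supNorm q ≤ munorm μ q := by
  obtain ⟨z0, -, hz0⟩ := Finset.exists_mem_eq_sup' Finset.univ_nonempty
    (fun z : X × A => |q z|)
  have h1 : μmin * q z0 ^ 2 ≤ ∑ z : X × A, μ z * q z ^ 2 := by
    refine le_trans (mul_le_mul_of_nonneg_right (hμ z0) (sq_nonneg _)) ?_
    exact Finset.single_le_sum
      (fun z _ => mul_nonneg (hμmin.le.trans (hμ z)) (sq_nonneg _)) (Finset.mem_univ z0)
  have h2 := Real.sqrt_le_sqrt h1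
  rw [Real.sqrt_mul hμmin.le, Real.sqrt_sq_eq_abs] at h2
  rw [supNorm, hz0]
  exact h2

end Aux

theorem fixed_point_projection_bound
    [Fintype X] [Fintype A] [Nonempty X] [Nonempty A] {k : ℕ}
    (P : X → A → X → ℝ) (r : X × A → ℝ) (γ : ℝ)
    (hγ0 : 0 ≤ γ) (hγ1 : γ < 1)
    (hP0 : ∀ x a x', 0 ≤ P x a x') (hP1 : ∀ x a, ∑ x' : X, P x a x' = 1)
    (φ : X × A → Fin k → ℝ) (μ : X × A → ℝ) (μmin : ℝ)
    (hμmin : 0 < μmin) (hμ : ∀ z, μmin ≤ μ z) (hμ1 : ∑ z : X × A, μ z = 1)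
    (hSig : IsUnit (cov μ φ).det)
    (n : ℕ) (hn : 1 ≤ n)
    (hcontr : (phiMax φ ^ 2 * sigmaMax (cov μ φ)⁻¹ / μmin) * γ ^ n < 1)
    (qstar : X × A → ℝ) (hq : qstar = bellman P r γ qstar)
    (ωt : Fin k → ℝ)
    (hωt : qlin φ ωt = proj μ φ ((bellman P r γ)^[n] (qlin φ ωt))) :
    munorm μ (proj μ φ qstar - qlin φ ωt) ≤
      ((phiMax φ ^ 2 * sigmaMax (cov μ φ)⁻¹ / μmin) * γ ^ n) *
        munorm μ (qstar - qlin φ ωt) := by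
  have hμ0 : ∀ z, 0 ≤ μ z := fun z => hμmin.le.trans (hμ z)
  set C := phiMax φ ^ 2 * sigmaMax (cov μ φ)⁻¹ with hCdef
  have hC0 : 0 ≤ C := mul_nonneg (sq_nonneg _) (norm_nonneg _)
  have hqfix : (bellman P r γ)^[n] qstar = qstar := Function.iterate_fixed hq.symm n
  set d : X × A → ℝ := fun w => qstar w - (bellman P r γ)^[n] (qlin φ ωt) w with hddef
  have key : proj μ φ qstar - qlin φ ωt = fun z => proj μ φ d z := by
    funext z
    rw [Pi.sub_apply, proj_sub]
    have := congrFun hωt z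
    rw [this]
  have hd : d = (bellman P r γ)^[n] qstar - (bellman P r γ)^[n] (qlin φ ωt) := by
    funext w
    rw [Pi.sub_apply, hqfix]
  have hμmin1 : μmin ≤ 1 := by
    obtain ⟨z⟩ := (inferInstance : Nonempty (X × A))
    have hle : μ z ≤ 1 := by
      rw [← hμ1]
      exact Finset.single_le_sum (fun w _ => hμ0 w) (Finset.mem_univ z)
    exact (hμ z).trans hle
  have hsq : μmin ≤ Real.sqrt μmin := by
    nlinarith [Real.sq_sqrt hμmin.le, Real.sqrt_nonneg μmin, Real.sqrt_pos.2 hμmin]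
  calc munorm μ (proj μ φ qstar - qlin φ ωt)
      = munorm μ (fun z => proj μ φ d z) := by rw [key]
    _ ≤ supNorm (fun z => proj μ φ d z) := munorm_le_supNorm μ _ hμ0 hμ1
    _ ≤ C * supNorm d := Finset.sup'_le _ _ fun z _ => proj_abs_le μ d φ hμ0 hμ1 z
    _ ≤ C * (γ ^ n * supNorm (qstar - qlin φ ωt)) := by
        refine mul_le_mul_of_nonneg_left ?_ hC0
        rw [hd]
        exact bellman_iterate_contract P r γ hγ0 hP0 hP1 _ _ n
    _ ≤ C * (γ ^ n * (munorm μ (qstar - qlin φ ωt) / Real.sqrt μmin)) := by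
        refine mul_le_mul_of_nonneg_left (mul_le_mul_of_nonneg_left ?_
          (pow_nonneg hγ0 n)) hC0
        rw [le_div_iff₀ (Real.sqrt_pos.2 hμmin), mul_comm]
        exact sqrt_mul_supNorm_le_munorm μ (qstar - qlin φ ωt) μmin hμmin hμ
    _ ≤ C * (γ ^ n * (munorm μ (qstar - qlin φ ωt) / μmin)) := by
        refine mul_le_mul_of_nonneg_left (mul_le_mul_of_nonneg_left ?_
          (pow_nonneg hγ0 n)) hC0
        exact div_le_div_of_nonneg_left (munorm_nonneg μ _) hμmin hsq
    _ = (C / μmin * γ ^ n) * munorm μ (qstar - qlin φ ωt) := by ring
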